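/- arXiv:1708.07187 — 2 statements merged into one kernel-verified Lean document; each statement's English description precedes it below -/
import Mathlib

section
/- Let A ~ Beta(p,q) and B ~ Beta(p+q,r) be independent, with p, q, r > 0. Then C := (1-B)/(1-AB) and D := 1-AB are independent, with C ~ Beta(r,q) and D ~ Beta(r+q,p). -/
/-!
The map `T(a, b) = ((1 - b) / (1 - ab), 1 - ab)` is an involution of the open unit square with
Jacobian determinant `-b / (1 - ab)`. The product of the `Beta(p, q)` and `Beta(p + q, r)`
densities at `(a, b)` equals `b / (1 - ab)` times the product of the `Beta(r, q)` and
`Beta(r + q, p)` densities at `T(a, b)`: both are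
`Γ(p+q+r) / (Γ(p) Γ(q) Γ(r)) · a^(p-1) (1-a)^(q-1) b^(p+q-1) (1-b)^(r-1)`.
By the change of variables formula `T` therefore pushes the law `Beta(p, q) ⊗ Beta(p + q, r)` of
`(A, B)` forward to `Beta(r, q) ⊗ Beta(r + q, p)`, and this is the law of `(C, D) = T(A, B)`.
-/

open MeasureTheory ProbabilityTheory

/-- The Gamma(a, b) distribution, with density `Γ(a)⁻¹ bᵃ x^{a-1} e^{-bx}` on `(0,∞)`. -/
noncomputable def gammaDist (a b : ℝ) : Measure ℝ :=
  volume.withDensity fun x => ENNReal.ofReal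
    (if 0 < x then (Real.Gamma a)⁻¹ * b ^ a * x ^ (a - 1) * Real.exp (-(b * x)) else 0)

/-- The Beta(a, b) distribution, with density
`(Γ(a+b)/(Γ(a)Γ(b))) x^{a-1} (1-x)^{b-1}` on `(0,1)`. -/
noncomputable def betaDist (a b : ℝ) : Measure ℝ :=
  volume.withDensity fun x => ENNReal.ofReal
    (if 0 < x ∧ x < 1 then
      (Real.Gamma (a + b) / (Real.Gamma a * Real.Gamma b)) * x ^ (a - 1) * (1 - x) ^ (b - 1)
    else 0)

open Set
open scoped ENNReal

theorem map_withDensity_eq_withDensity_of_injOn {E : Type*} [NormedAddCommGroup E]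
    [NormedSpace ℝ E] [FiniteDimensional ℝ E] [MeasurableSpace E] [BorelSpace E]
    (μ : Measure E) [μ.IsAddHaarMeasure] {f : E → E} {f' : E → E →L[ℝ] E} {s : Set E}
    {g h : E → ℝ≥0∞} (hs : MeasurableSet s) (hf : Measurable f)
    (hf' : ∀ x ∈ s, HasFDerivWithinAt f (f' x) s x) (hinj : InjOn f s)
    (hh : h.support ⊆ s) (hg : g.support ⊆ f '' s)
    (hdens : ∀ x ∈ s, h x = ENNReal.ofReal |(f' x).det| * g (f x)) :
    (μ.withDensity h).map f = μ.withDensity g := by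
  ext t ht
  have hpre : MeasurableSet (f ⁻¹' t) := hf ht
  rw [Measure.map_apply hf ht, withDensity_apply _ hpre, withDensity_apply _ ht]
  calc ∫⁻ x in f ⁻¹' t, h x ∂μ
      = ∫⁻ x in s ∩ f ⁻¹' t, h x ∂μ := by
        rw [← Measure.restrict_restrict' hpre, setLIntegral_eq_of_support_subset hh]
    _ = ∫⁻ x in s ∩ f ⁻¹' t, ENNReal.ofReal |(f' x).det| * g (f x) ∂μ :=
        setLIntegral_congr_fun (hs.inter hpre) fun x hx => hdens x hx.1
    _ = ∫⁻ y in f '' s ∩ t, g y ∂μ := by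
        rw [← image_inter_preimage, lintegral_image_eq_lintegral_abs_det_fderiv_mul μ
          (hs.inter hpre) (fun x hx => (hf' x hx.1).mono inter_subset_left)
          (hinj.mono inter_subset_left)]
    _ = ∫⁻ y in t, g y ∂μ := by
        rw [← Measure.restrict_restrict' ht, setLIntegral_eq_of_support_subset hg]

theorem indepFun_and_map_eq_of_map_prodMk_eq_prod {Ω α β : Type*} [MeasurableSpace Ω]
    [MeasurableSpace α] [MeasurableSpace β] {μ : Measure Ω} [IsFiniteMeasure μ]
    {ν₁ : Measure α} {ν₂ : Measure β} [IsProbabilityMeasure ν₁] [IsProbabilityMeasure ν₂]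
    {X : Ω → α} {Y : Ω → β} (hX : Measurable X) (hY : Measurable Y)
    (h : μ.map (fun ω => (X ω, Y ω)) = ν₁.prod ν₂) :
    IndepFun X Y μ ∧ μ.map X = ν₁ ∧ μ.map Y = ν₂ := by
  have hX' : μ.map X = ν₁ := by rw [← Measure.fst_map_prodMk hY, h, Measure.fst_prod]
  have hY' : μ.map Y = ν₂ := by rw [← Measure.snd_map_prodMk hX, h, Measure.snd_prod]
  refine ⟨?_, hX', hY'⟩
  rw [indepFun_iff_map_prod_eq_prod_map_map hX.aemeasurable hY.aemeasurable, h, hX', hY']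

lemma betaDist_eq_betaMeasure (a b : ℝ) : betaDist a b = betaMeasure a b := by
  unfold betaDist betaMeasure
  congr 1 with x
  rw [betaPDF_eq, beta, one_div_div]

lemma betaMeasure_prod (a b c d : ℝ) :
    (betaMeasure a b).prod (betaMeasure c d) =
      volume.withDensity fun z : ℝ × ℝ => betaPDF a b z.1 * betaPDF c d z.2 :=
  prod_withDensity (measurable_betaPDFReal a b).ennreal_ofReal
    (measurable_betaPDFReal c d).ennreal_ofReal

lemma support_betaPDF_subset (a b : ℝ) : (betaPDF a b).support ⊆ Ioo 0 1 :=
  fun x hx => by_contra fun h => hx (by simp [betaPDF_eq, ← mem_Ioo, h])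

lemma ProbabilityTheory.beta_mul_beta_add {a b : ℝ} (c : ℝ) (hab : 0 < a + b) :
    beta a b * beta (a + b) c =
      Real.Gamma a * Real.Gamma b * Real.Gamma c / Real.Gamma (a + b + c) := by
  have := (Real.Gamma_pos_of_pos hab).ne'
  simp only [beta]
  field_simp

namespace SeshadriWesolowski

noncomputable def swMap (z : ℝ × ℝ) : ℝ × ℝ :=
  ((1 - z.2) / (1 - z.1 * z.2), 1 - z.1 * z.2)

def unitSquare : Set (ℝ × ℝ) := Ioo 0 1 ×ˢ Ioo 0 1

lemma measurableSet_unitSquare : MeasurableSet unitSquare :=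
  measurableSet_Ioo.prod measurableSet_Ioo

lemma support_betaPDF_mul_betaPDF_subset (a b c d : ℝ) :
    (fun z : ℝ × ℝ => betaPDF a b z.1 * betaPDF c d z.2).support ⊆ unitSquare :=
  fun _ hz => ⟨support_betaPDF_subset a b (left_ne_zero_of_mul hz),
    support_betaPDF_subset c d (right_ne_zero_of_mul hz)⟩

lemma measurable_swMap : Measurable swMap := by
  unfold swMap
  fun_prop

lemma mapsTo_swMap : MapsTo swMap unitSquare unitSquare := by
  rintro ⟨a, b⟩ ⟨⟨ha0, ha1⟩, hb0, hb1⟩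
  dsimp only at ha0 ha1 hb0 hb1
  have hd : 0 < 1 - a * b := by nlinarith
  exact ⟨⟨div_pos (by linarith) hd, (div_lt_one hd).2 (by nlinarith)⟩, hd,
    sub_lt_self 1 (mul_pos ha0 hb0)⟩

lemma leftInvOn_swMap : LeftInvOn swMap swMap unitSquare := by
  rintro ⟨a, b⟩ ⟨⟨-, ha1⟩, hb0, hb1⟩
  dsimp only at ha1 hb0 hb1
  have hd : 1 - a * b ≠ 0 := by nlinarith
  simp only [swMap, div_mul_cancel₀ _ hd, sub_sub_cancel]
  ext
  · exact mul_div_cancel_right₀ a hb0.ne'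
  · rfl

lemma bijOn_swMap : BijOn swMap unitSquare unitSquare :=
  InvOn.bijOn ⟨leftInvOn_swMap, leftInvOn_swMap⟩ mapsTo_swMap mapsTo_swMap

noncomputable def fderivSwMap (z : ℝ × ℝ) : ℝ × ℝ →L[ℝ] ℝ × ℝ :=
  (Matrix.toLin (.finTwoProd ℝ) (.finTwoProd ℝ)
    !![z.2 * (1 - z.2) / (1 - z.1 * z.2) ^ 2, (z.1 - 1) / (1 - z.1 * z.2) ^ 2;
      -z.2, -z.1]).toContinuousLinearMap

theorem hasFDerivAt_swMap {z : ℝ × ℝ} (hz : 1 - z.1 * z.2 ≠ 0) :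
    HasFDerivAt swMap (fderivSwMap z) z := by
  have hd : HasFDerivAt (fun w : ℝ × ℝ => 1 - w.1 * w.2)
      (-(z.1 • ContinuousLinearMap.snd ℝ ℝ ℝ + z.2 • ContinuousLinearMap.fst ℝ ℝ ℝ)) z := by
    simpa using (hasFDerivAt_fst.mul hasFDerivAt_snd).const_sub (1 : ℝ)
  have hc := (hasFDerivAt_snd.const_sub (1 : ℝ)).mul ((hasFDerivAt_inv hz).comp z hd)
  have hfun : swMap = fun w => ((1 - w.2) * (1 - w.1 * w.2)⁻¹, 1 - w.1 * w.2) := by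
    ext w <;> simp [swMap, div_eq_mul_inv]
  rw [hfun]
  refine (hc.prodMk hd).congr_fderiv ?_
  unfold fderivSwMap
  rw [Matrix.toLin_finTwoProd_toContinuousLinearMap]
  ext <;> simp
  · ring
  · field_simp
    ring

theorem det_fderivSwMap (z : ℝ × ℝ) : (fderivSwMap z).det = -(z.2 / (1 - z.1 * z.2)) := by
  unfold fderivSwMap
  simp only [LinearMap.det_toContinuousLinearMap, LinearMap.det_toLin, Matrix.det_fin_two_of]
  rw [eq_neg_iff_add_eq_zero]
  field_simp
  ring

/-- With `x = a`, `y = b`, `u = 1 - a`, `v = 1 - b`, `d = 1 - ab`, this is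
`betaPDF_mul_betaPDF_eq` without the normalizing constants. -/
lemma rpow_identity {x y u v d : ℝ} (hx : 0 < x) (hy : 0 < y) (hu : 0 < u) (hv : 0 < v)
    (hd : 0 < d) (p q r : ℝ) :
    x ^ (p - 1) * u ^ (q - 1) * (y ^ (p + q - 1) * v ^ (r - 1)) =
      y / d * ((v / d) ^ (r - 1) * (y * u / d) ^ (q - 1) *
        (d ^ (r + q - 1) * (x * y) ^ (p - 1))) := by
  have split (w : ℝ) (hw : 0 < w) (s t : ℝ) : w ^ (s + t - 1) = w ^ (s - 1) * w ^ (t - 1) * w := by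
    rw [← Real.rpow_add hw, ← Real.rpow_add_one hw.ne']
    ring_nf
  rw [Real.div_rpow hv.le hd.le, Real.div_rpow (by positivity) hd.le, Real.mul_rpow hy.le hu.le,
    Real.mul_rpow hx.le hy.le, split d hd, split y hy]
  field_simp

lemma betaPDF_mul_betaPDF_eq {p q r : ℝ} (hp : 0 < p) (hq : 0 < q) (hr : 0 < r) {z : ℝ × ℝ}
    (hz : z ∈ unitSquare) :
    betaPDF p q z.1 * betaPDF (p + q) r z.2 =
      ENNReal.ofReal |(fderivSwMap z).det| *
        (betaPDF r q (swMap z).1 * betaPDF (r + q) p (swMap z).2) := by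
  obtain ⟨⟨hc0, hc1⟩, hd0, hd1⟩ := mapsTo_swMap hz
  obtain ⟨a, b⟩ := z
  obtain ⟨⟨ha0, ha1⟩, hb0, hb1⟩ := hz
  dsimp only [swMap] at *
  simp only [det_fderivSwMap, abs_neg, abs_of_pos (div_pos hb0 hd0), betaPDF]
  rw [← ENNReal.ofReal_mul (betaPDFReal_pos ha0 ha1 hp hq).le,
    ← ENNReal.ofReal_mul (betaPDFReal_pos hc0 hc1 hr hq).le,
    ← ENNReal.ofReal_mul (div_pos hb0 hd0).le]
  congr 1
  simp only [betaPDFReal, if_pos (And.intro ha0 ha1), if_pos (And.intro hb0 hb1),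
    if_pos (And.intro hc0 hc1), if_pos (And.intro hd0 hd1)]
  have hbeta : beta p q * beta (p + q) r = beta r q * beta (r + q) p := by
    rw [beta_mul_beta_add r (by positivity), beta_mul_beta_add p (by positivity),
      show r + q + p = p + q + r by ring]
    ring
  have h1c : 1 - (1 - b) / (1 - a * b) = b * (1 - a) / (1 - a * b) := by
    rw [one_sub_div hd0.ne']
    ring
  rw [h1c, sub_sub_cancel]
  calc 1 / beta p q * a ^ (p - 1) * (1 - a) ^ (q - 1) *
        (1 / beta (p + q) r * b ^ (p + q - 1) * (1 - b) ^ (r - 1))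
      = (beta p q * beta (p + q) r)⁻¹ *
          (a ^ (p - 1) * (1 - a) ^ (q - 1) * (b ^ (p + q - 1) * (1 - b) ^ (r - 1))) := by
        ring
    _ = (beta r q * beta (r + q) p)⁻¹ * (b / (1 - a * b) *
          (((1 - b) / (1 - a * b)) ^ (r - 1) * (b * (1 - a) / (1 - a * b)) ^ (q - 1) *
            ((1 - a * b) ^ (r + q - 1) * (a * b) ^ (p - 1)))) := by
        rw [hbeta, rpow_identity ha0 hb0 (by linarith) (by linarith) hd0]
    _ = _ := by ring

theorem map_swMap_betaMeasure_prod {p q r : ℝ} (hp : 0 < p) (hq : 0 < q) (hr : 0 < r) :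
    ((betaMeasure p q).prod (betaMeasure (p + q) r)).map swMap =
      (betaMeasure r q).prod (betaMeasure (r + q) p) := by
  rw [betaMeasure_prod, betaMeasure_prod]
  refine map_withDensity_eq_withDensity_of_injOn volume measurableSet_unitSquare measurable_swMap
    (fun z hz => ?_) bijOn_swMap.injOn (support_betaPDF_mul_betaPDF_subset _ _ _ _) ?_
    (fun z hz => betaPDF_mul_betaPDF_eq hp hq hr hz)
  · exact (hasFDerivAt_swMap (mapsTo_swMap hz).2.1.ne').hasFDerivWithinAt
  · rw [bijOn_swMap.image_eq]
    exact support_betaPDF_mul_betaPDF_subset _ _ _ _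

end SeshadriWesolowski

open SeshadriWesolowski in
/-- Seshadri–Wesołowski, forward direction: if `A ~ Beta(p,q)` and
`B ~ Beta(p+q,r)` are independent, then `C = (1-B)/(1-AB)` and `D = 1-AB` are
independent with `C ~ Beta(r,q)` and `D ~ Beta(r+q,p)`. -/
theorem stmt_9 {Ω : Type*} [MeasurableSpace Ω] (μ : Measure Ω) [IsProbabilityMeasure μ]
    (A B : Ω → ℝ) (hA : Measurable A) (hB : Measurable B)
    (p q r : ℝ) (hp : 0 < p) (hq : 0 < q) (hr : 0 < r)
    (hAdist : μ.map A = betaDist p q) (hBdist : μ.map B = betaDist (p + q) r)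
    (hind : IndepFun A B μ) :
    IndepFun (fun ω => (1 - B ω) / (1 - A ω * B ω)) (fun ω => 1 - A ω * B ω) μ ∧
    μ.map (fun ω => (1 - B ω) / (1 - A ω * B ω)) = betaDist r q ∧
    μ.map (fun ω => 1 - A ω * B ω) = betaDist (r + q) p := by
  simp only [betaDist_eq_betaMeasure] at hAdist hBdist ⊢
  have hAB : μ.map (fun ω => (A ω, B ω)) = (betaMeasure p q).prod (betaMeasure (p + q) r) := by
    rw [(indepFun_iff_map_prod_eq_prod_map_map hA.aemeasurable hB.aemeasurable).mp hind,
      hAdist, hBdist]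
  have hCD : μ.map (fun ω => ((1 - B ω) / (1 - A ω * B ω), 1 - A ω * B ω)) =
      (betaMeasure r q).prod (betaMeasure (r + q) p) := by
    rw [show (fun ω => ((1 - B ω) / (1 - A ω * B ω), 1 - A ω * B ω)) =
        swMap ∘ fun ω => (A ω, B ω) from rfl,
      ← Measure.map_map measurable_swMap (hA.prodMk hB), hAB, map_swMap_betaMeasure_prod hp hq hr]
  have := isProbabilityMeasureBeta hr hq
  have := isProbabilityMeasureBeta (add_pos hr hq) hp
  exact indepFun_and_map_eq_of_map_prodMk_eq_prod (by fun_prop) (by fun_prop) hCD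
end

section
/- Let R¹, R², Y be independent random variables with R¹ ~ Gamma(μ+λ, β), R² ~ InverseBeta(λ, μ), Y ~ Gamma(μ, β), where λ, μ, β > 0. Then (Y + R¹/R², Y·R²/R¹ + 1) has the same distribution as (R¹, R²). (Invariance of the strict-weak/gamma model under T^{h,Y} with h(y) = 1.) -/
open MeasureTheory ProbabilityTheory

/-!
Put `A = R¹/R²`. If `U ~ Ga(λ+μ, β)` and `V ~ Be(λ, μ)` are independent, then
`(UV, U(1-V)) ~ Ga(λ, β) ⊗ Ga(μ, β)`: this is a change of variables with Jacobian `U`, under which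
the densities factor because `u^{λ+μ-1} v^{λ-1} (1-v)^{μ-1} = u · (uv)^{λ-1} (u(1-v))^{μ-1}`.
Applied to `(U, V) = (R¹, 1/R²)` it shows `A ~ Ga(λ, β)`; as `A` is independent of `Y`, the pair
`(A, Y)` has the law of `(UV, U(1-V))`. Finally, the map `(a, y) ↦ (y + a, y/a + 1)` sends
`(UV, U(1-V))` to `(U, 1/V)`, which has the law of `(R¹, R²)`.
-/

open Set
open scoped ENNReal

section ChangeOfVariables

variable {E : Type*} [NormedAddCommGroup E] [NormedSpace ℝ E] [FiniteDimensional ℝ E]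
  [MeasurableSpace E] [BorelSpace E] (μ : Measure E) [μ.IsAddHaarMeasure]

theorem map_withDensity_eq_withDensity_of_injOn_s11 {f : E → E} {f' : E → E →L[ℝ] E} {s : Set E}
    {ρ σ : E → ℝ≥0∞} (hs : MeasurableSet s) (hf : Measurable f)
    (hf' : ∀ x ∈ s, HasFDerivWithinAt f (f' x) s x) (hinj : InjOn f s)
    (hρ : ρ.support ⊆ s) (hσ : σ.support ⊆ f '' s)
    (hρσ : ∀ x ∈ s, ρ x = ENNReal.ofReal |(f' x).det| * σ (f x)) :
    (μ.withDensity ρ).map f = μ.withDensity σ := by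
  ext t ht
  rw [Measure.map_apply hf ht, withDensity_apply _ (hf ht), withDensity_apply _ ht]
  calc ∫⁻ x in f ⁻¹' t, ρ x ∂μ = ∫⁻ x in s, (f ⁻¹' t).indicator ρ x ∂μ := by
        rw [← lintegral_indicator (hf ht), setLIntegral_eq_of_support_subset
          (support_indicator.trans_subset (inter_subset_right.trans hρ))]
    _ = ∫⁻ x in s, ENNReal.ofReal |(f' x).det| * t.indicator σ (f x) ∂μ := by
        refine setLIntegral_congr_fun hs fun x hx => ?_
        by_cases hxt : f x ∈ t
        · simp [indicator_of_mem (show x ∈ f ⁻¹' t from hxt), indicator_of_mem hxt, hρσ x hx]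
        · simp [indicator_of_notMem (show x ∉ f ⁻¹' t from hxt), indicator_of_notMem hxt]
    _ = ∫⁻ y in f '' s, t.indicator σ y ∂μ :=
        (lintegral_image_eq_lintegral_abs_det_fderiv_mul μ hs hf' hinj _).symm
    _ = ∫⁻ y in t, σ y ∂μ := by
        rw [setLIntegral_eq_of_support_subset
          (support_indicator.trans_subset (inter_subset_right.trans hσ)), lintegral_indicator ht]

end ChangeOfVariables

theorem support_ofReal_mul_ofReal_subset {α β : Type*} (f : α → ℝ) (g : β → ℝ) :
    (fun p : α × β => ENNReal.ofReal (f p.1) * ENNReal.ofReal (g p.2)).support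
      ⊆ f.support ×ˢ g.support := fun p hp => by
  obtain ⟨h1, h2⟩ := mul_ne_zero_iff.1 hp
  exact ⟨(ENNReal.ofReal_ne_zero_iff.1 h1).ne', (ENNReal.ofReal_ne_zero_iff.1 h2).ne'⟩

noncomputable def gammaDensity (a b x : ℝ) : ℝ :=
  if 0 < x then (Real.Gamma a)⁻¹ * b ^ a * x ^ (a - 1) * Real.exp (-(b * x)) else 0

noncomputable def betaDensity (a b x : ℝ) : ℝ :=
  if 0 < x ∧ x < 1 then
    (Real.Gamma (a + b) / (Real.Gamma a * Real.Gamma b)) * x ^ (a - 1) * (1 - x) ^ (b - 1)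
  else 0

theorem gammaDist_eq_withDensity (a b : ℝ) :
    gammaDist a b = volume.withDensity fun x => ENNReal.ofReal (gammaDensity a b x) := rfl

theorem betaDist_eq_withDensity (a b : ℝ) :
    betaDist a b = volume.withDensity fun x => ENNReal.ofReal (betaDensity a b x) := rfl

@[fun_prop]
theorem measurable_gammaDensity (a b : ℝ) : Measurable (gammaDensity a b) :=
  Measurable.ite measurableSet_Ioi (by fun_prop) measurable_const

@[fun_prop]
theorem measurable_betaDensity (a b : ℝ) : Measurable (betaDensity a b) :=
  Measurable.ite (measurableSet_Ioi.inter measurableSet_Iio) (by fun_prop) measurable_const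

theorem support_gammaDensity_subset {a b : ℝ} : (gammaDensity a b).support ⊆ Ioi 0 := fun _ hx => by
  by_contra h
  exact hx (if_neg h)

theorem support_betaDensity_subset {a b : ℝ} : (betaDensity a b).support ⊆ Ioo 0 1 := fun _ hx => by
  by_contra h
  exact hx (if_neg h)

theorem gammaDensity_nonneg {a b : ℝ} (ha : 0 < a) (hb : 0 < b) (x : ℝ) :
    0 ≤ gammaDensity a b x := by
  have := Real.Gamma_pos_of_pos ha
  unfold gammaDensity
  split_ifs <;> positivity

theorem gammaDist_eq_gammaMeasure (a b : ℝ) : gammaDist a b = gammaMeasure a b := by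
  refine withDensity_congr_ae ?_
  filter_upwards [measure_eq_zero_iff_ae_notMem.mp (measure_singleton (0 : ℝ))] with x hx
  rcases lt_or_gt_of_ne (show x ≠ 0 from hx) with hneg | hpos
  · simp [gammaPDF, gammaPDFReal, hneg.not_gt, hneg.not_ge]
  · simp only [gammaPDF, gammaPDFReal, if_pos hpos, if_pos hpos.le]
    ring_nf

theorem isProbabilityMeasure_gammaDist {a b : ℝ} (ha : 0 < a) (hb : 0 < b) :
    IsProbabilityMeasure (gammaDist a b) := by
  rw [gammaDist_eq_gammaMeasure]
  exact isProbabilityMeasure_gammaMeasure ha hb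

theorem gammaDist_prod_betaDist_eq_withDensity (a b c d : ℝ) :
    (gammaDist a b).prod (betaDist c d) = volume.withDensity fun p =>
      ENNReal.ofReal (gammaDensity a b p.1) * ENNReal.ofReal (betaDensity c d p.2) := by
  rw [gammaDist_eq_withDensity, betaDist_eq_withDensity, prod_withDensity (by fun_prop)
    (by fun_prop), Measure.volume_eq_prod]

theorem gammaDist_prod_gammaDist_eq_withDensity (a b c d : ℝ) :
    (gammaDist a b).prod (gammaDist c d) = volume.withDensity fun p =>
      ENNReal.ofReal (gammaDensity a b p.1) * ENNReal.ofReal (gammaDensity c d p.2) := by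
  rw [gammaDist_eq_withDensity, gammaDist_eq_withDensity, prod_withDensity (by fun_prop)
    (by fun_prop), Measure.volume_eq_prod]

theorem ae_mem_gammaDist_prod_betaDist (a b c d : ℝ) :
    ∀ᵐ p ∂(gammaDist a b).prod (betaDist c d), p ∈ Ioi 0 ×ˢ Ioo 0 1 := by
  rw [gammaDist_prod_betaDist_eq_withDensity, ae_withDensity_iff (by fun_prop)]
  exact ae_of_all _ fun p hp => prod_mono support_gammaDensity_subset support_betaDensity_subset
    (support_ofReal_mul_ofReal_subset _ _ hp)

section BetaGamma

variable {l m b : ℝ}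

noncomputable def gammaSplit (p : ℝ × ℝ) : ℝ × ℝ := (p.1 * p.2, p.1 * (1 - p.2))

@[fun_prop]
theorem measurable_gammaSplit : Measurable gammaSplit := by
  unfold gammaSplit; fun_prop

noncomputable def gammaSplitDeriv (p : ℝ × ℝ) : ℝ × ℝ →L[ℝ] ℝ × ℝ :=
  LinearMap.toContinuousLinearMap <| Matrix.toLin (Module.Basis.finTwoProd ℝ)
    (Module.Basis.finTwoProd ℝ) !![p.2, p.1; 1 - p.2, -p.1]

theorem hasFDerivAt_gammaSplit (p : ℝ × ℝ) : HasFDerivAt gammaSplit (gammaSplitDeriv p) p := by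
  rw [gammaSplitDeriv, Matrix.toLin_finTwoProd_toContinuousLinearMap]
  have hfst := hasFDerivAt_fst (𝕜 := ℝ) (p := p)
  have hsnd := hasFDerivAt_snd (𝕜 := ℝ) (p := p)
  refine ((hfst.mul hsnd).prodMk (hfst.mul ((hasFDerivAt_const 1 p).sub hsnd))).congr_fderiv ?_
  ext <;> simp

theorem det_gammaSplitDeriv (p : ℝ × ℝ) : (gammaSplitDeriv p).det = -p.1 := by
  simp only [gammaSplitDeriv, LinearMap.det_toContinuousLinearMap, LinearMap.det_toLin,
    Matrix.det_fin_two_of]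
  ring

theorem injOn_gammaSplit : InjOn gammaSplit (Ioi 0 ×ˢ Ioo 0 1) := by
  rintro ⟨u, v⟩ ⟨hu, -⟩ ⟨u', v'⟩ - h
  simp only [gammaSplit, Prod.mk.injEq] at h
  have huu' : u = u' := by linear_combination h.1 + h.2
  subst huu'
  exact Prod.ext rfl (mul_left_cancel₀ (ne_of_gt hu) h.1)

theorem Ioi_prod_Ioi_subset_image_gammaSplit :
    Ioi 0 ×ˢ Ioi 0 ⊆ gammaSplit '' (Ioi 0 ×ˢ Ioo 0 1) := by
  rintro ⟨x, y⟩ ⟨hx, hy⟩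
  have hxy : 0 < x + y := add_pos hx hy
  refine ⟨(x + y, x / (x + y)), ⟨hxy, div_pos hx hxy, (div_lt_one hxy).2 (by simpa using hy)⟩, ?_⟩
  simp only [gammaSplit, Prod.mk.injEq]
  exact ⟨by field_simp, by field_simp; ring⟩

theorem gammaDensity_add_mul_betaDensity (hl : 0 < l) (hm : 0 < m) (hb : 0 < b) {u v : ℝ}
    (hu : 0 < u) (hv : v ∈ Ioo 0 1) :
    gammaDensity (m + l) b u * betaDensity l m v
      = u * (gammaDensity l b (u * v) * gammaDensity m b (u * (1 - v))) := by
  obtain ⟨hv0, hv1⟩ := hv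
  have hw : 0 < 1 - v := by linarith
  rw [gammaDensity, gammaDensity, gammaDensity, betaDensity, if_pos hu, if_pos ⟨hv0, hv1⟩,
    if_pos (mul_pos hu hv0), if_pos (mul_pos hu hw),
    Real.mul_rpow hu.le hv0.le, Real.mul_rpow hu.le hw.le, add_comm l m,
    show m + l - 1 = (l - 1) + (m - 1) + 1 by ring, Real.rpow_add_one hu.ne',
    Real.rpow_add hu, Real.rpow_add hb]
  have := Real.Gamma_pos_of_pos hl
  have := Real.Gamma_pos_of_pos hm
  have := Real.Gamma_pos_of_pos (add_pos hm hl)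
  have hexp : Real.exp (-(b * u))
      = Real.exp (-(b * (u * v))) * Real.exp (-(b * (u * (1 - v)))) := by
    rw [← Real.exp_add]; ring_nf
  rw [hexp]
  field_simp

theorem map_gammaSplit_gammaDist_prod_betaDist (hl : 0 < l) (hm : 0 < m) (hb : 0 < b) :
    ((gammaDist (m + l) b).prod (betaDist l m)).map gammaSplit
      = (gammaDist l b).prod (gammaDist m b) := by
  rw [gammaDist_prod_betaDist_eq_withDensity, gammaDist_prod_gammaDist_eq_withDensity]
  refine map_withDensity_eq_withDensity_of_injOn_s11 volume
    (measurableSet_Ioi.prod measurableSet_Ioo) measurable_gammaSplit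
    (fun p _ => (hasFDerivAt_gammaSplit p).hasFDerivWithinAt) injOn_gammaSplit
    ((support_ofReal_mul_ofReal_subset _ _).trans
      (prod_mono support_gammaDensity_subset support_betaDensity_subset))
    ((support_ofReal_mul_ofReal_subset _ _).trans
      ((prod_mono support_gammaDensity_subset support_gammaDensity_subset).trans
        Ioi_prod_Ioi_subset_image_gammaSplit)) ?_
  rintro ⟨u, v⟩ ⟨hu, hv⟩
  have hu : 0 < u := hu
  rw [det_gammaSplitDeriv, abs_neg, abs_of_pos hu, gammaSplit,
    ← ENNReal.ofReal_mul (gammaDensity_nonneg (add_pos hm hl) hb u),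
    ← ENNReal.ofReal_mul (gammaDensity_nonneg hl hb _), ← ENNReal.ofReal_mul hu.le,
    gammaDensity_add_mul_betaDensity hl hm hb hu hv]

theorem map_mul_gammaDist_prod_betaDist (hl : 0 < l) (hm : 0 < m) (hb : 0 < b) :
    ((gammaDist (m + l) b).prod (betaDist l m)).map (fun p => p.1 * p.2) = gammaDist l b := by
  have := isProbabilityMeasure_gammaDist hm hb
  rw [show (fun p : ℝ × ℝ => p.1 * p.2) = Prod.fst ∘ gammaSplit from rfl,
    ← Measure.map_map measurable_fst measurable_gammaSplit,
    map_gammaSplit_gammaDist_prod_betaDist hl hm hb, Measure.map_fst_prod, measure_univ, one_smul]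

theorem map_gammaDist_prod_gammaDist (hl : 0 < l) (hm : 0 < m) (hb : 0 < b) :
    ((gammaDist l b).prod (gammaDist m b)).map (fun p => (p.2 + p.1, p.2 / p.1 + 1))
      = ((gammaDist (m + l) b).prod (betaDist l m)).map (fun p => (p.1, p.2⁻¹)) := by
  rw [← map_gammaSplit_gammaDist_prod_betaDist hl hm hb,
    Measure.map_map (by fun_prop) measurable_gammaSplit]
  refine Measure.map_congr ?_
  filter_upwards [ae_mem_gammaDist_prod_betaDist (m + l) b l m] with ⟨u, v⟩ ⟨hu, hv, _⟩
  have hu : u ≠ 0 := ne_of_gt hu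
  have hv : v ≠ 0 := ne_of_gt hv
  simp only [Function.comp_apply, gammaSplit, Prod.mk.injEq]
  refine ⟨by ring, ?_⟩
  field_simp
  ring

end BetaGamma

/-- invariance of the strict-weak (gamma) model. If `R¹, R², Y` are
independent with `R¹ ~ Ga(μ+λ,β)`, `R² ~ Be⁻¹(λ,μ)`, `Y ~ Ga(μ,β)` (`λ,μ,β > 0`),
then `(Y + R¹/R², Y·R²/R¹ + 1) =ᵈ (R¹, R²)`. -/
theorem stmt_11 {Ω : Type*} [MeasurableSpace Ω] (μ : Measure Ω) [IsProbabilityMeasure μ]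
    (R1 R2 Y : Ω → ℝ) (hR1 : Measurable R1) (hR2 : Measurable R2) (hY : Measurable Y)
    (hind : iIndepFun ![R1, R2, Y] μ)
    (l m b : ℝ) (hl : 0 < l) (hm : 0 < m) (hb : 0 < b)
    (hR1d : μ.map R1 = gammaDist (m + l) b)
    (hR2d : μ.map (fun ω => (R2 ω)⁻¹) = betaDist l m)
    (hYd : μ.map Y = gammaDist m b) :
    μ.map (fun ω => (Y ω + R1 ω / R2 ω, Y ω * R2 ω / R1 ω + 1))
      = μ.map (fun ω => (R1 ω, R2 ω)) := by
  have hmeas : ∀ i, Measurable (![R1, R2, Y] i) := fun i => by fin_cases i <;> assumption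
  have hR12 : IndepFun R1 R2 μ := by simpa using hind.indepFun (show (0 : Fin 3) ≠ 1 by decide)
  have hR12Y : IndepFun (fun ω => (R1 ω, R2 ω)) Y μ := by
    simpa using hind.indepFun_prodMk hmeas 0 1 2 (by decide) (by decide)
  have hRV : μ.map (fun ω => (R1 ω, (R2 ω)⁻¹)) = (gammaDist (m + l) b).prod (betaDist l m) := by
    rw [← hR1d, ← hR2d]
    exact (indepFun_iff_map_prod_eq_prod_map_map hR1.aemeasurable hR2.inv.aemeasurable).1
      (hR12.comp measurable_id measurable_inv)
  have hA : μ.map (fun ω => R1 ω / R2 ω) = gammaDist l b := by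
    rw [← map_mul_gammaDist_prod_betaDist hl hm hb, ← hRV, Measure.map_map (by fun_prop)
      (by fun_prop)]
    rfl
  have hAY : μ.map (fun ω => (R1 ω / R2 ω, Y ω)) = (gammaDist l b).prod (gammaDist m b) := by
    rw [← hA, ← hYd]
    exact (indepFun_iff_map_prod_eq_prod_map_map (hR1.div hR2).aemeasurable hY.aemeasurable).1
      (hR12Y.comp (measurable_fst.div measurable_snd) measurable_id)
  calc μ.map (fun ω => (Y ω + R1 ω / R2 ω, Y ω * R2 ω / R1 ω + 1))
      = (μ.map (fun ω => (R1 ω / R2 ω, Y ω))).map (fun p => (p.2 + p.1, p.2 / p.1 + 1)) := by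
        rw [Measure.map_map (by fun_prop) (by fun_prop)]
        simp only [Function.comp_def, div_div_eq_mul_div]
    _ = (μ.map (fun ω => (R1 ω, (R2 ω)⁻¹))).map (fun p => (p.1, p.2⁻¹)) := by
        rw [hAY, hRV, map_gammaDist_prod_gammaDist hl hm hb]
    _ = μ.map (fun ω => (R1 ω, R2 ω)) := by
        rw [Measure.map_map (by fun_prop) (by fun_prop)]
        simp only [Function.comp_def, inv_inv]
end
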